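/- Assume f \in C^1([0,\infty)) satisfies f(0)=0 and there is c_0 > 0 with -f(s) < c_0 s^{p-1} for all sufficiently small s > 0. If u is a positive solution of the one-dimensional problem (1) for some \lambda > 0, then u'(1) < 0. -/

import Mathlib

open Set

/-- `φ_p(t) = t |t|^{p-2}` (real exponent), with `φ_p(0)=0`. -/
noncomputable def phi (p t : ℝ) : ℝ := t * |t| ^ (p - 2)

/-- `φ_p'(t) = (p-1) |t|^{p-2}`. -/
noncomputable def phi' (p t : ℝ) : ℝ := (p - 1) * |t| ^ (p - 2)

/-- The derivative of a function on `[-1,1]` (one-sided at the endpoints). -/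
noncomputable def du (u : ℝ → ℝ) : ℝ → ℝ := derivWithin u (Set.Icc (-1) 1)

/-- A positive (classical) solution of the one-dimensional problem (1):
`(φ_p(u'))' + λ f(u) = 0` on `(-1,1)`, `u(-1) = u(1) = 0`,
with `u ∈ C^1[-1,1]`, `φ_p ∘ u' ∈ C^1((-1,1))`, and `u > 0` on `(-1,1)`. -/
structure Sol1D (p lam : ℝ) (f : ℝ → ℝ) (u : ℝ → ℝ) : Prop where
  reg : ContDiffOn ℝ 1 u (Set.Icc (-1) 1)
  reg' : ContDiffOn ℝ 1 (fun x => phi p (du u x)) (Set.Ioo (-1) 1)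
  pos : ∀ x ∈ Set.Ioo (-1:ℝ) 1, 0 < u x
  bcm : u (-1) = 0
  bc1 : u 1 = 0
  ode : ∀ x ∈ Set.Ioo (-1:ℝ) 1,
    deriv (fun y => phi p (du u y)) x + lam * f (u x) = 0

/-- A solution of the linearized problem (4) at `u`:
`(φ_p'(u') w')' + λ f'(u) w = 0` on `(-1,1)`, `w(-1) = w(1) = 0`. -/
structure Lin1D (p lam : ℝ) (f : ℝ → ℝ) (u w : ℝ → ℝ) : Prop where
  reg : ContDiffOn ℝ 1 w (Set.Icc (-1) 1)
  reg' : ContDiffOn ℝ 1 (fun x => phi' p (du u x) * du w x) (Set.Ioo (-1) 1)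
  ode : ∀ x ∈ Set.Ioo (-1:ℝ) 1,
    deriv (fun y => phi' p (du u y) * du w y) x + lam * deriv f (u x) * w x = 0
  bcm : w (-1) = 0
  bc1 : w 1 = 0

open Filter Topology

/-
If `u'(1) = 0`, the first integral `(p-1)/p |u'|^p + λ F(u)` (with `F' = f`) is constant on
`(-1,1)` and vanishes at `1`, so `(p-1)/p |u'|^p = -λ F(u) ≤ λ c₀ u^p / p` near `1`. Hence
`|u'| ≤ K u` there, so `e^{Kx} u(x)` is nondecreasing near `1`; as it vanishes at `1` and is
positive inside, this is impossible. That `u'(1) ≤ 0` is clear since `u ≥ 0 = u(1)`.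
-/

section PLaplacian

variable {p : ℝ}

lemma abs_phi (hp : 1 < p) (t : ℝ) : |phi p t| = |t| ^ (p - 1) := by
  rcases eq_or_ne t 0 with rfl | ht
  · simp [phi, Real.zero_rpow (by linarith : p - 1 ≠ 0)]
  · rw [phi, abs_mul, abs_of_nonneg (Real.rpow_nonneg (abs_nonneg t) _),
      show p - 1 = 1 + (p - 2) by ring, Real.rpow_add (abs_pos.mpr ht), Real.rpow_one]

lemma abs_phi_rpow_conj (hp : 1 < p) (t : ℝ) : |phi p t| ^ (p / (p - 1)) = |t| ^ p := by
  rw [abs_phi hp, ← Real.rpow_mul (abs_nonneg t), mul_div_cancel₀ _ (by linarith)]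

/-- `φ_{p'} ∘ φ_p = id` for the conjugate exponent `p' = p/(p-1)`. -/
lemma abs_phi_rpow_mul_phi (hp : 1 < p) (t : ℝ) :
    |phi p t| ^ (p / (p - 1) - 2) * phi p t = t := by
  rcases eq_or_ne t 0 with rfl | ht
  · simp [phi]
  have hexp : (p - 1) * (p / (p - 1) - 2) + (p - 2) = 0 := by
    field_simp [(by linarith : p - 1 ≠ 0)]; ring
  rw [abs_phi hp, ← Real.rpow_mul (abs_nonneg t), phi, mul_left_comm,
    ← Real.rpow_add (abs_pos.mpr ht), hexp, Real.rpow_zero, mul_one]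

/-- Via `|v|^p = |φ_p(v)|^{p'}`, `p' = p/(p-1)`. -/
lemma HasDerivAt.abs_rpow_of_phi (hp : 1 < p) {v : ℝ → ℝ} {a x : ℝ}
    (h : HasDerivAt (fun y => phi p (v y)) a x) :
    HasDerivAt (fun y => |v y| ^ p) (p / (p - 1) * v x * a) x := by
  have hq : 1 < p / (p - 1) := by rw [lt_div_iff₀ (by linarith)]; linarith
  have h' := (hasDerivAt_abs_rpow (phi p (v x)) hq).comp x h
  simp only [Function.comp_def, abs_phi_rpow_conj hp, mul_assoc,
    abs_phi_rpow_mul_phi hp] at h'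
  simpa only [mul_assoc] using h'

end PLaplacian

lemma derivWithin_Icc_right_nonpos_of_isMinOn {u : ℝ → ℝ} {a b : ℝ} (hab : a < b)
    (hd : DifferentiableWithinAt ℝ u (Icc a b) b) (hmin : IsMinOn u (Icc a b) b) :
    derivWithin u (Icc a b) b ≤ 0 := by
  have hcone : -(b - a) ∈ posTangentConeAt (Icc a b) b :=
    mem_posTangentConeAt_of_segment_subset (by
      rw [show b + -(b - a) = a by ring, segment_symm, segment_eq_Icc hab.le])
  have := hmin.localize.hasFDerivWithinAt_nonneg hd.hasDerivWithinAt.hasFDerivWithinAt hcone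
  rw [ContinuousLinearMap.toSpanSingleton_apply, smul_eq_mul] at this
  nlinarith

lemma exp_mul_mul_le_of_neg_mul_le_deriv {u u' : ℝ → ℝ} {a b K : ℝ} (hab : a ≤ b)
    (hc : ContinuousOn u (Icc a b)) (hd : ∀ x ∈ Ioo a b, HasDerivAt u (u' x) x)
    (hK : ∀ x ∈ Ioo a b, -(K * u x) ≤ u' x) :
    Real.exp (K * a) * u a ≤ Real.exp (K * b) * u b := by
  have hmono : MonotoneOn (fun x => Real.exp (K * x) * u x) (Icc a b) := by
    refine monotoneOn_of_hasDerivWithinAt_nonneg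
      (f' := fun x => Real.exp (K * x) * K * u x + Real.exp (K * x) * u' x) (convex_Icc a b)
      ((by fun_prop : Continuous fun x => Real.exp (K * x)).continuousOn.mul hc)
      (fun x hx => ?_) (fun x hx => ?_) <;> rw [interior_Icc] at hx
    · have hexp : HasDerivAt (fun x => Real.exp (K * x)) (Real.exp (K * x) * K) x := by
        simpa using ((hasDerivAt_id x).const_mul K).exp
      exact (hexp.mul (hd x hx)).hasDerivWithinAt
    · nlinarith [hK x hx, Real.exp_pos (K * x)]
  exact hmono (left_mem_Icc.2 hab) (right_mem_Icc.2 hab) hab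

lemma neg_integral_le_of_neg_le_rpow {f : ℝ → ℝ} {c p s : ℝ} (hp : 0 < p) (hs : 0 ≤ s)
    (hf : ContinuousOn f (Icc 0 s)) (hle : ∀ t ∈ Icc 0 s, -f t ≤ c * t ^ (p - 1)) :
    -∫ t in (0:ℝ)..s, f t ≤ c * s ^ p / p := by
  have hint : IntervalIntegrable (fun t => c * t ^ (p - 1)) MeasureTheory.volume 0 s :=
    (intervalIntegral.intervalIntegrable_rpow' (by linarith)).const_mul c
  have := intervalIntegral.integral_mono_on (f := fun t => -f t) hs
    (hf.neg.intervalIntegrable_of_Icc hs) hint hle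
  rw [intervalIntegral.integral_neg, intervalIntegral.integral_const_mul,
    integral_rpow (Or.inl (by linarith)), sub_add_cancel, Real.zero_rpow hp.ne', sub_zero] at this
  rwa [mul_div_assoc]

/-- The first integral of `(φ_p(u'))' + λ f(u) = 0`. -/
noncomputable def energy (p lam : ℝ) (f u : ℝ → ℝ) (x : ℝ) : ℝ :=
  (p - 1) / p * |du u x| ^ p + lam * ∫ t in (0:ℝ)..u x, f t

namespace Sol1D

variable {p lam : ℝ} {f u : ℝ → ℝ}

lemma nonneg (hu : Sol1D p lam f u) {x : ℝ} (hx : x ∈ Icc (-1) 1) : 0 ≤ u x := by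
  rcases hx.1.eq_or_lt with rfl | h1
  · rw [hu.bcm]
  rcases hx.2.eq_or_lt with rfl | h2
  · rw [hu.bc1]
  exact (hu.pos x ⟨h1, h2⟩).le

lemma hasDerivAt (hu : Sol1D p lam f u) {x : ℝ} (hx : x ∈ Ioo (-1) 1) :
    HasDerivAt u (du u x) x :=
  ((hu.reg.differentiableOn one_ne_zero x (Ioo_subset_Icc_self hx)).hasDerivWithinAt).hasDerivAt
    (Icc_mem_nhds hx.1 hx.2)

lemma hasDerivAt_phi_du (hu : Sol1D p lam f u) {x : ℝ} (hx : x ∈ Ioo (-1) 1) :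
    HasDerivAt (fun y => phi p (du u y)) (-(lam * f (u x))) x := by
  have hd := ((hu.reg'.differentiableOn one_ne_zero x hx).differentiableAt
    (isOpen_Ioo.mem_nhds hx)).hasDerivAt
  rwa [eq_neg_of_add_eq_zero_left (hu.ode x hx)] at hd

lemma du_one_nonpos (hu : Sol1D p lam f u) : du u 1 ≤ 0 :=
  derivWithin_Icc_right_nonpos_of_isMinOn (by norm_num)
    (hu.reg.differentiableOn one_ne_zero 1 (right_mem_Icc.2 (by norm_num)))
    (fun x hx => by simpa [hu.bc1] using hu.nonneg hx)

lemma hasDerivAt_energy (hu : Sol1D p lam f u) (hp : 1 < p) (hf : ContinuousOn f (Ici 0))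
    {x : ℝ} (hx : x ∈ Ioo (-1) 1) : HasDerivAt (energy p lam f u) 0 x := by
  have hux := hu.pos x hx
  have hF : HasDerivAt (fun s => ∫ t in (0:ℝ)..s, f t) (f (u x)) (u x) :=
    intervalIntegral.integral_hasDerivAt_right
      ((hf.mono Icc_subset_Ici_self).intervalIntegrable_of_Icc hux.le)
      ((hf.mono (Ioi_subset_Ici le_rfl)).stronglyMeasurableAtFilter isOpen_Ioi _ hux)
      (hf.continuousAt (Ici_mem_nhds hux))
  have h : HasDerivAt (energy p lam f u) _ x :=
    (((hu.hasDerivAt_phi_du hx).abs_rpow_of_phi hp).const_mul ((p - 1) / p)).add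
      ((hF.comp x (hu.hasDerivAt hx)).const_mul lam)
  refine h.congr_deriv ?_
  field_simp [(by linarith : p - 1 ≠ 0), (by linarith : p ≠ 0)]
  ring

lemma continuousOn_energy (hu : Sol1D p lam f u) (hp : 1 < p) (hf : ContinuousOn f (Ici 0)) :
    ContinuousOn (energy p lam f u) (Icc (-1) 1) := by
  obtain ⟨xm, hxm, hmax⟩ := isCompact_Icc.exists_isMaxOn (nonempty_Icc.2 (by norm_num))
    hu.reg.continuousOn
  have hF : ContinuousOn (fun s => ∫ t in (0:ℝ)..s, f t) (Icc 0 (u xm)) := by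
    simpa [uIcc_of_le (hu.nonneg hxm)] using intervalIntegral.continuousOn_primitive_interval
      (((hf.mono Icc_subset_Ici_self).integrableOn_compact isCompact_Icc).mono_set
        (uIcc_of_le (hu.nonneg hxm)).subset)
  refine ContinuousOn.add (continuousOn_const.mul ?_) (continuousOn_const.mul ?_)
  · exact (hu.reg.continuousOn_derivWithin (uniqueDiffOn_Icc (by norm_num)) le_rfl).abs.rpow_const
      fun _ _ => Or.inr (by linarith)
  · exact hF.comp hu.reg.continuousOn fun x hx => ⟨hu.nonneg hx, hmax hx⟩

lemma energy_eq_zero (hu : Sol1D p lam f u) (hp : 1 < p) (hf : ContinuousOn f (Ici 0))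
    (hdu : du u 1 = 0) {x : ℝ} (hx : x ∈ Ioo (-1) 1) : energy p lam f u x = 0 := by
  have hconst := constant_of_has_deriv_right_zero
    ((hu.continuousOn_energy hp hf).mono (Icc_subset_Icc hx.1.le le_rfl))
    (fun y hy => (hu.hasDerivAt_energy hp hf ⟨hx.1.trans_le hy.1, hy.2⟩).hasDerivWithinAt)
    1 (right_mem_Icc.2 hx.2.le)
  rw [← hconst, energy, hdu, hu.bc1]
  simp [Real.zero_rpow (by linarith : p ≠ 0)]

lemma abs_du_le_mul (hu : Sol1D p lam f u) (hp : 1 < p) (hlam : 0 ≤ lam)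
    (hf : ContinuousOn f (Ici 0)) (hdu : du u 1 = 0) {c₀ : ℝ} (hc₀ : 0 ≤ c₀) {x : ℝ}
    (hx : x ∈ Ioo (-1) 1) (hfx : ∀ t ∈ Icc 0 (u x), -f t ≤ c₀ * t ^ (p - 1)) :
    |du u x| ≤ (lam * c₀ / (p - 1)) ^ (1 / p) * u x := by
  have hux := (hu.pos x hx).le
  have hA : 0 ≤ lam * c₀ / (p - 1) := div_nonneg (by positivity) (by linarith)
  have hE := hu.energy_eq_zero hp hf hdu hx
  have hF := neg_integral_le_of_neg_le_rpow (by linarith) hux (hf.mono Icc_subset_Ici_self) hfx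
  have hpow : |du u x| ^ p ≤ ((lam * c₀ / (p - 1)) ^ (1 / p) * u x) ^ p := by
    rw [Real.mul_rpow (Real.rpow_nonneg hA _) hux, ← Real.rpow_mul hA,
      one_div_mul_cancel (by linarith), Real.rpow_one]
    rw [energy] at hE
    have h : (p - 1) / p * |du u x| ^ p ≤ lam * (c₀ * u x ^ p / p) := by nlinarith
    rw [div_mul_eq_mul_div, le_div_iff₀ (by linarith)]
    field_simp at h
    linarith
  exact (Real.rpow_le_rpow_iff (abs_nonneg _) (by positivity) (by linarith)).1 hpow

lemma exists_lt_near_one (hu : Sol1D p lam f u) {s₀ : ℝ} (hs₀ : 0 < s₀) :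
    ∃ x₀ ∈ Ioo (-1 : ℝ) 1, ∀ x ∈ Ioo x₀ 1, u x < s₀ := by
  have hI : ∀ᶠ x in 𝓝[<] (1:ℝ), x ∈ Ioo (-1) 1 := Ioo_mem_nhdsLT (by norm_num)
  have hu1 : Tendsto u (𝓝[<] 1) (𝓝 0) := by
    rw [← hu.bc1]
    exact ((hu.reg.continuousOn.continuousWithinAt (right_mem_Icc.2 (by norm_num))).mono
      Ioo_subset_Icc_self).tendsto.mono_left (nhdsWithin_le_of_mem hI)
  obtain ⟨a, ha, hsub⟩ := mem_nhdsLT_iff_exists_Ioo_subset.1 (hu1.eventually_lt_const hs₀)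
  obtain ⟨x₀, hax₀, hx₀⟩ := exists_between (max_lt ha (by norm_num : (-1:ℝ) < 1))
  exact ⟨x₀, ⟨(le_max_right _ _).trans_lt hax₀, hx₀⟩,
    fun x hx => hsub ⟨(le_max_left _ _).trans_lt (hax₀.trans hx.1), hx.2⟩⟩

end Sol1D

/-- Lemma 3.1 (Hopf's lemma in the one-dimensional case): `u'(1) < 0`. -/
theorem stmt11 (p : ℝ) (hp : 1 < p) (lam : ℝ) (hlam : 0 < lam)
    (f : ℝ → ℝ) (hf : ContDiffOn ℝ 1 f (Set.Ici 0))
    (hf0 : f 0 = 0)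
    (hc : ∃ c₀ > (0:ℝ), ∃ s₀ > (0:ℝ), ∀ s ∈ Set.Ioo (0:ℝ) s₀, -f s < c₀ * s ^ (p - 1))
    (u : ℝ → ℝ) (hu : Sol1D p lam f u) :
    du u 1 < 0 := by
  obtain ⟨c₀, hc₀, s₀, hs₀, hcs⟩ := hc
  refine hu.du_one_nonpos.lt_of_ne fun hdu => ?_
  have hneg : ∀ s < s₀, ∀ t ∈ Icc 0 s, -f t ≤ c₀ * t ^ (p - 1) := fun s hs t ht => by
    rcases ht.1.eq_or_lt with rfl | ht0
    · simp [hf0, Real.zero_rpow (by linarith : p - 1 ≠ 0)]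
    · exact (hcs t ⟨ht0, ht.2.trans_lt hs⟩).le
  obtain ⟨x₀, hx₀, hsmall⟩ := hu.exists_lt_near_one hs₀
  set K := (lam * c₀ / (p - 1)) ^ (1 / p)
  have hgrowth := exp_mul_mul_le_of_neg_mul_le_deriv (K := K) hx₀.2.le
    (hu.reg.continuousOn.mono (Icc_subset_Icc hx₀.1.le le_rfl))
    (fun x hx => hu.hasDerivAt ⟨hx₀.1.trans hx.1, hx.2⟩)
    (fun x hx => by
      linarith [neg_abs_le (du u x), hu.abs_du_le_mul hp hlam.le hf.continuousOn hdu hc₀.le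
        ⟨hx₀.1.trans hx.1, hx.2⟩ (hneg _ (hsmall x hx))])
  rw [hu.bc1, mul_zero] at hgrowth
  linarith [mul_pos (Real.exp_pos (K * x₀)) (hu.pos x₀ hx₀)]
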